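/- arXiv:1706.02998 — 4 statements merged into one kernel-verified Lean document; each statement's English description precedes it below -/
import Mathlib

section
/- For a triangle-free (d+1)-regular graph with d ≥ 1, the level-1 QAOA expectation value F(γ,β) = (|E|/2)·(1 + sin(4β)·sin(γ)·cos^d(γ)) of the MaxCut Hamiltonian satisfies F(γ,β) ≤ (|E|/2)·(1 + (1/√(d+1))·(d/(d+1))^{d/2}) for all real γ, β, with equality at (γ,β) = (arctan(1/√d), π/8). -/
open Real

lemma amgm_aux (d : ℕ) (hd : 1 ≤ d) (x : ℝ) (hx0 : 0 ≤ x) (hx1 : x ≤ 1) :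
    x * (1 - x) ^ d ≤ (1 / ((d : ℝ) + 1)) * ((d : ℝ) / ((d : ℝ) + 1)) ^ d := by
  have hD : (1:ℝ) ≤ (d:ℝ) := by exact_mod_cast hd
  have hD0 : (0:ℝ) < (d:ℝ) := by linarith
  have hD1 : (0:ℝ) < (d:ℝ) + 1 := by linarith
  set D := (d:ℝ) with hDdef
  set p₁ := (D + 1) * x with hp₁
  set p₂ := (D + 1) * (1 - x) / D with hp₂
  have hp₁0 : 0 ≤ p₁ := mul_nonneg (by linarith) hx0
  have hp₂0 : 0 ≤ p₂ := div_nonneg (mul_nonneg (by linarith) (by linarith)) hD0.le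
  have key : p₁ ^ ((1:ℝ)/(D+1)) * p₂ ^ (D/(D+1)) ≤ 1 := by
    have h := Real.geom_mean_le_arith_mean2_weighted
      (by positivity : (0:ℝ) ≤ 1/(D+1)) (by positivity : (0:ℝ) ≤ D/(D+1)) hp₁0 hp₂0
      (by field_simp; ring)
    have heq : 1/(D+1) * p₁ + D/(D+1) * p₂ = 1 := by
      rw [hp₁, hp₂]; field_simp; ring
    linarith [h, heq.le, heq.ge]
  have key2 : p₁ * p₂ ^ d ≤ 1 := by
    have h2 : (p₁ ^ ((1:ℝ)/(D+1)) * p₂ ^ (D/(D+1))) ^ (D+1) ≤ 1 := by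
      calc (p₁ ^ ((1:ℝ)/(D+1)) * p₂ ^ (D/(D+1))) ^ (D+1)
          ≤ (1:ℝ) ^ (D+1) := Real.rpow_le_rpow (by positivity) key (by linarith)
        _ = 1 := Real.one_rpow _
    rw [Real.mul_rpow (by positivity) (by positivity), ← Real.rpow_mul hp₁0,
      ← Real.rpow_mul hp₂0, one_div_mul_cancel (by linarith : D + 1 ≠ 0),
      div_mul_cancel₀ _ (by linarith : D + 1 ≠ 0), Real.rpow_one] at h2
    rw [show p₂ ^ (D:ℝ) = p₂ ^ d by rw [hDdef, Real.rpow_natCast]] at h2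
    exact h2
  have hid : x * (1 - x) ^ d = (p₁ * p₂ ^ d) * ((1 / (D + 1)) * (D / (D+1)) ^ d) := by
    rw [hp₁, hp₂, div_pow, div_pow, mul_pow]
    field_simp
  calc x * (1 - x) ^ d = (p₁ * p₂ ^ d) * ((1 / (D + 1)) * (D / (D+1)) ^ d) := hid
    _ ≤ 1 * ((1 / (D + 1)) * (D / (D+1)) ^ d) := by
        apply mul_le_mul_of_nonneg_right key2 (by positivity)
    _ = (1 / (D + 1)) * (D / (D+1)) ^ d := one_mul _

/-- For a triangle-free `(d+1)`-regular graph with `d ≥ 1`, the level-1 QAOA MaxCut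
expectation `F(γ,β) = (|E|/2)·(1 + sin(4β)·sin(γ)·cos^d(γ))` is bounded above by
`(|E|/2)·(1 + (1/√(d+1))·(d/(d+1))^{d/2})`, with equality at `(γ,β) = (arctan(1/√d), π/8)`. -/
theorem qaoa1_triangle_free_regular_max
    (d : ℕ) (hd : 1 ≤ d) (E : ℝ) (hE : 0 < E) (F : ℝ → ℝ → ℝ)
    (hF : ∀ γ β : ℝ, F γ β = (E / 2) * (1 + Real.sin (4 * β) * Real.sin γ * Real.cos γ ^ d)) :
    (∀ γ β : ℝ, F γ β ≤
        (E / 2) * (1 + (1 / Real.sqrt (d + 1)) * ((d / (d + 1) : ℝ) ^ ((d : ℝ) / 2)))) ∧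
    F (Real.arctan (1 / Real.sqrt d)) (Real.pi / 8) =
        (E / 2) * (1 + (1 / Real.sqrt (d + 1)) * ((d / (d + 1) : ℝ) ^ ((d : ℝ) / 2))) := by
  have hD : (1:ℝ) ≤ (d:ℝ) := by exact_mod_cast hd
  have hD0 : (0:ℝ) < (d:ℝ) := by linarith
  have hD1 : (0:ℝ) < (d:ℝ) + 1 := by linarith
  set D := (d:ℝ) with hDdef
  set M : ℝ := (1 / Real.sqrt (D + 1)) * ((D / (D + 1)) ^ (D / 2)) with hM
  have hM0 : 0 ≤ M := by positivity
  have hexp : ((D / (D + 1)) ^ (D / 2) : ℝ) ^ 2 = (D / (D + 1)) ^ d := by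
    rw [← Real.rpow_natCast ((D / (D+1)) ^ (D/2)) 2, ← Real.rpow_mul (by positivity),
      show D / 2 * ((2:ℕ):ℝ) = ((d:ℕ):ℝ) by rw [hDdef]; push_cast; ring,
      Real.rpow_natCast]
  have hMsq : M ^ 2 = (1 / (D + 1)) * (D / (D + 1)) ^ d := by
    rw [hM, mul_pow, div_pow, one_pow, Real.sq_sqrt hD1.le, hexp]
  have habs : ∀ γ : ℝ, |Real.sin γ * Real.cos γ ^ d| ≤ M := by
    intro γ
    have h1 : (Real.sin γ * Real.cos γ ^ d) ^ 2 ≤ M ^ 2 := by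
      have hc : Real.cos γ ^ 2 = 1 - Real.sin γ ^ 2 := Real.cos_sq' γ
      have he : (Real.sin γ * Real.cos γ ^ d) ^ 2
          = Real.sin γ ^ 2 * (1 - Real.sin γ ^ 2) ^ d := by
        calc (Real.sin γ * Real.cos γ ^ d) ^ 2
            = Real.sin γ ^ 2 * (Real.cos γ ^ 2) ^ d := by ring
          _ = Real.sin γ ^ 2 * (1 - Real.sin γ ^ 2) ^ d := by rw [hc]
      rw [he, hMsq]
      exact amgm_aux d hd _ (sq_nonneg _)
        (by nlinarith [Real.sin_sq_add_cos_sq γ, sq_nonneg (Real.cos γ)])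
    have h2 := Real.sqrt_le_sqrt h1
    rwa [Real.sqrt_sq_eq_abs, Real.sqrt_sq hM0] at h2
  constructor
  · intro γ β
    rw [hF]
    have hb : Real.sin (4*β) * Real.sin γ * Real.cos γ ^ d ≤ M := by
      calc Real.sin (4*β) * Real.sin γ * Real.cos γ ^ d
          ≤ |Real.sin (4*β) * (Real.sin γ * Real.cos γ ^ d)| := by
            rw [← mul_assoc]; exact le_abs_self _
        _ = |Real.sin (4*β)| * |Real.sin γ * Real.cos γ ^ d| := abs_mul _ _
        _ ≤ 1 * M := by
            exact mul_le_mul (Real.abs_sin_le_one _) (habs γ) (abs_nonneg _) zero_le_one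
        _ = M := one_mul _
    nlinarith [hb, hE]
  · rw [hF]
    have hsin4 : Real.sin (4 * (Real.pi / 8)) = 1 := by
      norm_num [show 4 * (Real.pi / 8) = Real.pi / 2 by ring, Real.sin_pi_div_two]
    have hx2 : (1 / Real.sqrt D) ^ 2 = 1 / D := by
      rw [div_pow, one_pow, Real.sq_sqrt hD0.le]
    have h1x : 1 + (1 / Real.sqrt D) ^ 2 = (D + 1) / D := by
      rw [hx2]; field_simp
    have hsq : Real.sqrt ((D+1)/D) = Real.sqrt (D+1) / Real.sqrt D := Real.sqrt_div hD1.le _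
    have hsd : Real.sqrt D ≠ 0 := by positivity
    have hsd1 : Real.sqrt (D+1) ≠ 0 := by positivity
    have hcos : Real.cos (Real.arctan (1 / Real.sqrt D)) = Real.sqrt D / Real.sqrt (D+1) := by
      rw [Real.cos_arctan, h1x, hsq]
      field_simp
    have hsin : Real.sin (Real.arctan (1 / Real.sqrt D)) = 1 / Real.sqrt (D+1) := by
      rw [Real.sin_arctan, h1x, hsq]
      field_simp
    have hcospow : (Real.sqrt D / Real.sqrt (D+1)) ^ d = (D / (D+1)) ^ (D / 2) := by
      rw [← Real.sqrt_div hD0.le, Real.sqrt_eq_rpow,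
        ← Real.rpow_natCast ((D/(D+1)) ^ ((1:ℝ)/2)) d, ← Real.rpow_mul (by positivity)]
      congr 1
      ring
    rw [hsin4, hsin, hcos, hcospow, one_mul, hM]
end

section
/- For a triangle-free (d+1)-regular graph with d ≥ 1, there exist real angles γ, β such that the level-1 QAOA MaxCut expectation value satisfies F(γ,β)/|E| > (1/2)·(1 + 1/(√e·√(d+1))); that is, the optimal level-1 approximation ratio exceeds (1/2)(1 + 1/√(e(d+1))). -/
/-!
Taking `β = π/8` makes `sin 4β = 1`, and taking `sin γ = 1/√(d+1)` gives `cos² γ = d/(d+1)`, so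
`sin γ cos^d γ = (1/√(d+1)) · √((d/(d+1))^d)`. The bound then reduces to `(d/(d+1))^d > 1/e`,
which is `(1 + 1/d)^d < e`, a consequence of `1 + x < eˣ` at `x = 1/d`.
-/

open Real

lemma exp_neg_one_lt_div_add_one_pow (n : ℕ) : exp (-1) < ((n : ℝ) / (n + 1)) ^ n := by
  rcases Nat.eq_zero_or_pos n with rfl | hn
  · simp
  have hn' : (0 : ℝ) < n := by exact_mod_cast hn
  have hstep : exp (-(1 / n)) < n / (n + 1) := by
    rw [exp_neg, show (n : ℝ) / (n + 1) = (1 / (n : ℝ) + 1)⁻¹ by field_simp; ring]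
    exact inv_strictAnti₀ (by positivity) (add_one_lt_exp (by positivity))
  calc exp (-1) = exp (-(1 / n)) ^ n := by rw [← exp_nat_mul]; field_simp
    _ < _ := pow_lt_pow_left₀ hstep (exp_pos _).le hn.ne'

lemma sqrt_pow_of_nonneg {x : ℝ} (hx : 0 ≤ x) (n : ℕ) : √(x ^ n) = √x ^ n := by
  simp [sqrt_eq_rpow, ← rpow_natCast, ← rpow_mul hx, mul_comm]

lemma exists_sin_mul_cos_pow_gt (n : ℕ) :
    ∃ γ : ℝ, 1 / (√(exp 1) * √(n + 1)) < sin γ * cos γ ^ n := by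
  have hpos : (0 : ℝ) < n + 1 := by positivity
  set s : ℝ := 1 / √(n + 1) with hs_def
  have hs_pos : 0 < s := by positivity
  have hs_le : s ≤ 1 := by
    rw [hs_def, div_le_one (by positivity), one_le_sqrt]
    linarith [(n.cast_nonneg : (0 : ℝ) ≤ n)]
  have hsin : sin (arcsin s) = s := sin_arcsin (by linarith) hs_le
  have hcos : cos (arcsin s) ^ n = √((n / (n + 1)) ^ n) := by
    rw [cos_arcsin, hs_def, div_pow, one_pow, sq_sqrt hpos.le,
      show 1 - 1 / ((n : ℝ) + 1) = n / (n + 1) by field_simp; ring,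
      sqrt_pow_of_nonneg (by positivity)]
  have hlhs : 1 / (√(exp 1) * √(n + 1)) = s * √(exp (-1)) := by
    rw [exp_neg, sqrt_inv, hs_def]
    field_simp
  refine ⟨arcsin s, ?_⟩
  rw [hsin, hcos, hlhs]
  exact mul_lt_mul_of_pos_left
    (sqrt_lt_sqrt (exp_pos _).le (exp_neg_one_lt_div_add_one_pow n)) hs_pos

theorem qaoa1_approximation_ratio_lower_bound_general
    (d : ℕ) (E : ℝ) (hE : 0 < E) (F : ℝ → ℝ → ℝ)
    (hF : ∀ γ β : ℝ, F γ β = (E / 2) * (1 + Real.sin (4 * β) * Real.sin γ * Real.cos γ ^ d)) :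
    ∃ γ β : ℝ, F γ β / E >
      (1 / 2) * (1 + 1 / (Real.sqrt (Real.exp 1) * Real.sqrt (d + 1))) := by
  obtain ⟨γ, hγ⟩ := exists_sin_mul_cos_pow_gt d
  refine ⟨γ, π / 8, ?_⟩
  have hsin : sin (4 * (π / 8)) = 1 := by
    rw [show 4 * (π / 8) = π / 2 by ring, sin_pi_div_two]
  have hratio : F γ (π / 8) / E = (1 + sin γ * cos γ ^ d) / 2 := by
    rw [hF, hsin, one_mul]
    field_simp
  rw [hratio]
  linarith

/-- For a triangle-free `(d+1)`-regular graph with `d ≥ 1`, there are angles `γ, β` whose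
level-1 QAOA MaxCut approximation ratio exceeds `(1/2)(1 + 1/√(e(d+1)))`. -/
theorem qaoa1_approximation_ratio_lower_bound
    (d : ℕ) (hd : 1 ≤ d) (E : ℝ) (hE : 0 < E) (F : ℝ → ℝ → ℝ)
    (hF : ∀ γ β : ℝ, F γ β = (E / 2) * (1 + Real.sin (4 * β) * Real.sin γ * Real.cos γ ^ d)) :
    ∃ γ β : ℝ, F γ β / E >
      (1 / 2) * (1 + 1 / (Real.sqrt (Real.exp 1) * Real.sqrt (d + 1))) :=
  qaoa1_approximation_ratio_lower_bound_general d E hE F hF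
end

section
/- For level p = 1 and even n ≥ 4, with θ_k = (2k−1)π/n, the total pseudospin expectation satisfies Σ_{k=1}^{n/2} F((γ),(β),θ_k) = (n/2)·sin(4β)·sin(4γ); for n = 2 it equals n·sin(4β)·sin(4γ). -/
open Matrix Complex Real

noncomputable section

def σx : Matrix (Fin 2) (Fin 2) ℂ := !![0, 1; 1, 0]

def σz : Matrix (Fin 2) (Fin 2) ℂ := !![1, 0; 0, -1]

/-- The Bloch axis `n(θ) = cos θ · σz + sin θ · σx`. -/
def nvec (θ : ℝ) : Matrix (Fin 2) (Fin 2) ℂ :=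
  (Real.cos θ : ℂ) • σz + (Real.sin θ : ℂ) • σx

/-- `U_B(β) = exp(−2iβ·σz)`. -/
def UB (β : ℝ) : Matrix (Fin 2) (Fin 2) ℂ :=
  NormedSpace.exp ((-2 * β * Complex.I) • σz)

/-- `U_C(γ,θ) = exp(−2iγ·n(θ))`. -/
def UC (γ θ : ℝ) : Matrix (Fin 2) (Fin 2) ℂ :=
  NormedSpace.exp ((-2 * γ * Complex.I) • nvec θ)

/-- The level-`p` QAOA circuit `U(γ,β,θ) = U_B(β_p)·U_C(γ_p,θ)·⋯·U_B(β_1)·U_C(γ_1,θ)`. -/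
def Uqaoa (p : ℕ) (γ β : Fin p → ℝ) (θ : ℝ) : Matrix (Fin 2) (Fin 2) ℂ :=
  ((List.ofFn fun i : Fin p => UB (β i) * UC (γ i) θ).reverse).prod

/-- The pseudospin expectation `F(γ,β,θ) = Re tr[n(θ)·U·σz·U†]`. -/
def Fps (p : ℕ) (γ β : Fin p → ℝ) (θ : ℝ) : ℝ :=
  (Matrix.trace (nvec θ * Uqaoa p γ β θ * σz * (Uqaoa p γ β θ)ᴴ)).re

end

/-!
Since `n(θ)² = 1`, `exp(-2iγ n(θ)) = cos 2γ - i sin 2γ n(θ)`, and a 2 × 2 computation gives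
`F(θ) = 2 sin 4β sin 4γ sin² θ + cos θ · G(θ)` with `G(π - θ) = G(θ)`. The angles
`θ_k = (2k - 1)π/n` are permuted by `θ ↦ π - θ`, so the `cos θ · G(θ)` terms cancel in pairs and
the sum is `2 sin 4β sin 4γ ∑ sin² θ_k`. For `n ≥ 4` this is `n/4`, because
`2 sin x ∑ cos((2k - 1)x)` telescopes to `sin(nx)`, which vanishes at `x = 2π/n`; for `n = 2` the
single angle `π/2` gives `sin² = 1`.
-/

open NormedSpace in
theorem exp_smul_of_mul_self_eq_one {𝔸 : Type*} [NormedRing 𝔸] [NormedAlgebra ℂ 𝔸]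
    [CompleteSpace 𝔸] {a : 𝔸} (ha : a * a = 1) (z : ℂ) :
    exp (z • a) = Complex.cosh z • (1 : 𝔸) + Complex.sinh z • a := by
  have hpow : ∀ k : ℕ, a ^ (2 * k) = 1 := fun k => by rw [pow_mul, sq, ha, one_pow]
  refine (exp_series_hasSum_exp' (𝕂 := ℂ) (z • a)).unique (HasSum.even_add_odd ?_ ?_)
  · convert (Complex.hasSum_cosh z).smul_const (1 : 𝔸) using 2 with k
    rw [smul_pow, hpow, smul_smul, div_eq_inv_mul]
  · convert (Complex.hasSum_sinh z).smul_const a using 2 with k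
    rw [smul_pow, pow_succ a, hpow, one_mul, smul_smul, div_eq_inv_mul]

theorem Matrix.exp_smul_of_mul_self_eq_one {n : Type*} [Fintype n] [DecidableEq n]
    {A : Matrix n n ℂ} (hA : A * A = 1) (z : ℂ) :
    NormedSpace.exp (z • A) = Complex.cosh z • (1 : Matrix n n ℂ) + Complex.sinh z • A :=
  open scoped Norms.Operator in _root_.exp_smul_of_mul_self_eq_one hA z

lemma Finset.sum_Icc_one_reflect {M : Type*} [AddCommMonoid M] (f : ℕ → M) (m : ℕ) :
    ∑ k ∈ Finset.Icc 1 m, f (m + 1 - k) = ∑ k ∈ Finset.Icc 1 m, f k :=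
  Finset.sum_nbij' (fun k => m + 1 - k) (fun k => m + 1 - k)
    (by intro k hk; simp only [Finset.mem_Icc] at hk ⊢; omega)
    (by intro k hk; simp only [Finset.mem_Icc] at hk ⊢; omega)
    (by intro k hk; simp only [Finset.mem_Icc] at hk; omega)
    (by intro k hk; simp only [Finset.mem_Icc] at hk; omega)
    (fun _ _ => rfl)

lemma Real.two_mul_sin_mul_sum_cos_odd_mul (x : ℝ) (m : ℕ) :
    2 * Real.sin x * ∑ k ∈ Finset.Icc 1 m, Real.cos ((2 * k - 1) * x) = Real.sin (2 * m * x) := by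
  induction m with
  | zero => simp
  | succ m ih =>
    rw [Finset.sum_Icc_succ_top (by omega), mul_add, ih, Real.two_mul_sin_mul_cos,
      show x - (2 * ((m + 1 : ℕ) : ℝ) - 1) * x = -(2 * m * x) by push_cast; ring,
      show x + (2 * ((m + 1 : ℕ) : ℝ) - 1) * x = 2 * ((m + 1 : ℕ) : ℝ) * x by push_cast; ring,
      Real.sin_neg]
    ring

lemma nvec_eq (θ : ℝ) :
    nvec θ = !![(Real.cos θ : ℂ), Real.sin θ; Real.sin θ, -Real.cos θ] := by
  ext i j
  fin_cases i <;> fin_cases j <;> simp [nvec, σz, σx]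

lemma nvec_mul_self (θ : ℝ) : nvec θ * nvec θ = 1 := by
  have h : Complex.sin θ ^ 2 + Complex.cos θ ^ 2 = 1 := Complex.sin_sq_add_cos_sq _
  ext i j
  fin_cases i <;> fin_cases j <;>
    simp [nvec_eq] <;> first | ring1 | linear_combination h

lemma nvec_isHermitian (θ : ℝ) : (nvec θ).IsHermitian := by
  ext i j
  fin_cases i <;> fin_cases j <;> simp [nvec_eq, -Complex.ofReal_cos, -Complex.ofReal_sin]

lemma UC_eq (γ θ : ℝ) :
    UC γ θ = !![(Real.cos (2 * γ) : ℂ) - Real.sin (2 * γ) * I * Real.cos θ,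
        -(Real.sin (2 * γ) * I * Real.sin θ);
      -(Real.sin (2 * γ) * I * Real.sin θ),
        Real.cos (2 * γ) + Real.sin (2 * γ) * I * Real.cos θ] := by
  rw [UC, Matrix.exp_smul_of_mul_self_eq_one (nvec_mul_self θ),
    show -2 * (γ : ℂ) * I = ((-(2 * γ) : ℝ) : ℂ) * I by push_cast; ring,
    Complex.cosh_mul_I, Complex.sinh_mul_I]
  ext i j
  fin_cases i <;> fin_cases j <;> simp [nvec_eq]
  ring

lemma UC_conjTranspose (γ θ : ℝ) : (UC γ θ)ᴴ = UC (-γ) θ := by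
  rw [UC, UC, ← Matrix.exp_conjTranspose, Matrix.conjTranspose_smul, (nvec_isHermitian θ).eq]
  congr 2
  simp [Complex.conj_ofReal]

lemma UB_eq_UC (β : ℝ) : UB β = UC β 0 := by
  rw [UB, UC, nvec, Real.cos_zero, Real.sin_zero]
  simp

lemma Uqaoa_one (γ β θ : ℝ) : Uqaoa 1 (fun _ => γ) (fun _ => β) θ = UB β * UC γ θ := by
  simp [Uqaoa]

lemma Fps_one_eq (γ β θ : ℝ) :
    Fps 1 (fun _ => γ) (fun _ => β) θ =
      2 * Real.sin (4 * β) * Real.sin (4 * γ) * Real.sin θ ^ 2 + 2 * Real.cos θ *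
        (Real.cos (4 * γ) + (1 - Real.cos (4 * γ)) *
          (Real.cos θ ^ 2 + Real.sin θ ^ 2 * Real.cos (4 * β))) := by
  rw [Fps, Uqaoa_one, Matrix.conjTranspose_mul, UB_eq_UC, UC_conjTranspose, UC_conjTranspose,
    UC_eq, UC_eq, UC_eq, UC_eq, nvec_eq, σz]
  simp only [Matrix.mul_fin_two, Matrix.trace_fin_two_of, Real.cos_zero, Real.sin_zero, mul_neg,
    Real.cos_neg, Real.sin_neg]
  simp only [Complex.add_re, Complex.sub_re, Complex.neg_re, Complex.mul_re, Complex.mul_im,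
    Complex.add_im, Complex.sub_im, Complex.neg_im, Complex.I_re, Complex.I_im,
    Complex.ofReal_re, Complex.ofReal_im, Complex.zero_re, Complex.zero_im,
    Complex.one_re, Complex.one_im, Complex.ofReal_neg, Complex.ofReal_one, Complex.ofReal_zero]
  rw [show 4 * β = 2 * (2 * β) by ring, show 4 * γ = 2 * (2 * γ) by ring,
    Real.sin_two_mul (2 * β), Real.sin_two_mul (2 * γ), Real.cos_two_mul (2 * β),
    Real.cos_two_mul (2 * γ)]
  -- the difference of the two sides, reduced modulo the three identities `sin² + cos² = 1`
  linear_combination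
    2 * Real.cos θ * (Real.cos (2 * γ) ^ 2 + Real.sin (2 * γ) ^ 2 * Real.cos θ ^ 2
        - 3 * Real.sin (2 * γ) ^ 2 * Real.sin θ ^ 2) * Real.sin_sq_add_cos_sq (2 * β)
      + 2 * Real.cos θ * (4 * Real.cos (2 * β) ^ 2 * Real.sin θ ^ 2 - 3 * Real.sin θ ^ 2
        + Real.cos θ ^ 2) * Real.sin_sq_add_cos_sq (2 * γ)
      + 2 * Real.cos θ * (Real.cos (2 * γ) ^ 2 - 1) * Real.sin_sq_add_cos_sq θ

lemma Fps_one_add_Fps_one_pi_sub (γ β θ : ℝ) :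
    Fps 1 (fun _ => γ) (fun _ => β) θ + Fps 1 (fun _ => γ) (fun _ => β) (π - θ) =
      4 * Real.sin (4 * β) * Real.sin (4 * γ) * Real.sin θ ^ 2 := by
  rw [Fps_one_eq, Fps_one_eq, Real.cos_pi_sub, Real.sin_pi_sub]
  ring

lemma sum_Fps_one_odd_angles (γ β : ℝ) (n : ℕ) (hn : Even n) :
    ∑ k ∈ Finset.Icc 1 (n / 2), Fps 1 (fun _ => γ) (fun _ => β) ((2 * (k : ℝ) - 1) * π / n) =
      2 * Real.sin (4 * β) * Real.sin (4 * γ) *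
        ∑ k ∈ Finset.Icc 1 (n / 2), Real.sin ((2 * (k : ℝ) - 1) * π / n) ^ 2 := by
  obtain ⟨m, rfl⟩ := hn
  rw [show (m + m) / 2 = m by omega]
  set θ : ℕ → ℝ := fun k => (2 * (k : ℝ) - 1) * π / (m + m : ℕ) with hθ
  set F : ℝ → ℝ := Fps 1 (fun _ => γ) (fun _ => β)
  have hreflect : ∀ k ∈ Finset.Icc 1 m, θ (m + 1 - k) = π - θ k := by
    intro k hk
    rw [Finset.mem_Icc] at hk
    have : (m : ℝ) ≠ 0 := by exact_mod_cast (show m ≠ 0 by omega)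
    simp only [hθ]
    rw [Nat.cast_sub (by omega)]
    push_cast
    field_simp
    ring
  calc ∑ k ∈ Finset.Icc 1 m, F (θ k)
      = (∑ k ∈ Finset.Icc 1 m, F (θ k) + ∑ k ∈ Finset.Icc 1 m, F (θ (m + 1 - k))) / 2 := by
        rw [Finset.sum_Icc_one_reflect (fun k => F (θ k))]; ring
    _ = ∑ k ∈ Finset.Icc 1 m, (F (θ k) + F (π - θ k)) / 2 := by
        rw [Finset.sum_congr rfl fun k hk => congrArg F (hreflect k hk), ← Finset.sum_add_distrib,
          Finset.sum_div]
    _ = _ := by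
        rw [Finset.mul_sum]
        refine Finset.sum_congr rfl fun k _ => ?_
        rw [Fps_one_add_Fps_one_pi_sub]
        ring

lemma sum_sin_sq_odd_angles (n : ℕ) (hn : Even n) (h4 : 4 ≤ n) :
    ∑ k ∈ Finset.Icc 1 (n / 2), Real.sin ((2 * (k : ℝ) - 1) * π / n) ^ 2 = n / 4 := by
  obtain ⟨m, rfl⟩ := hn
  have hpos : 0 < Real.sin (2 * π / (m + m : ℕ)) := by
    apply Real.sin_pos_of_pos_of_lt_pi
    · positivity
    · rw [div_lt_iff₀ (by positivity)]
      push_cast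
      have : (4 : ℝ) ≤ m + m := by exact_mod_cast h4
      nlinarith [Real.pi_pos]
  have hcos : ∑ k ∈ Finset.Icc 1 m, Real.cos ((2 * k - 1) * (2 * π / (m + m : ℕ))) = 0 := by
    have h := Real.two_mul_sin_mul_sum_cos_odd_mul (2 * π / (m + m : ℕ)) m
    have : (m : ℝ) ≠ 0 := by exact_mod_cast (show m ≠ 0 by omega)
    rw [show 2 * (m : ℝ) * (2 * π / (m + m : ℕ)) = 2 * π by
      push_cast; field_simp; ring, Real.sin_two_pi] at h
    exact (mul_eq_zero.mp h).resolve_left (by positivity)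
  rw [show (m + m) / 2 = m by omega]
  simp_rw [Real.sin_sq_eq_half_sub, show ∀ k : ℕ, 2 * ((2 * (k : ℝ) - 1) * π / (m + m : ℕ)) =
    (2 * k - 1) * (2 * π / (m + m : ℕ)) from fun k => by ring]
  rw [Finset.sum_sub_distrib, ← Finset.sum_div, ← Finset.sum_div, hcos, Finset.sum_const,
    Nat.card_Icc, nsmul_eq_mul]
  push_cast
  ring

/-- For level `p = 1` and even `n ≥ 4`, with `θ_k = (2k−1)π/n`, the total pseudospin
expectation is `(n/2)·sin(4β)·sin(4γ)`; for `n = 2` it equals `n·sin(4β)·sin(4γ)`. -/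
theorem qaoa1_ring_total_expectation (γ β : ℝ) :
    (∀ n : ℕ, Even n → 4 ≤ n →
      ∑ k ∈ Finset.Icc 1 (n / 2),
          Fps 1 (fun _ => γ) (fun _ => β) ((2 * (k : ℝ) - 1) * Real.pi / n)
        = ((n : ℝ) / 2) * (Real.sin (4 * β) * Real.sin (4 * γ))) ∧
    ∑ k ∈ Finset.Icc 1 (2 / 2 : ℕ),
        Fps 1 (fun _ => γ) (fun _ => β) ((2 * (k : ℝ) - 1) * Real.pi / 2)
      = (2 : ℝ) * (Real.sin (4 * β) * Real.sin (4 * γ)) := by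
  constructor
  · intro n hn h4
    rw [sum_Fps_one_odd_angles γ β n hn, sum_sin_sq_odd_angles n hn h4]
    ring
  · have h := sum_Fps_one_odd_angles γ β 2 even_two
    norm_num at h ⊢
    rw [h]
    ring
end

section
/- The pseudospin expectation is an even function of the angle sequence: F(γ, β, θ) = F(−γ, −β, θ) for all γ, β ∈ ℝ^p and all θ ∈ ℝ. -/
open Matrix Complex Real

noncomputable section

/-! All matrices entering `F` except the phases `-2iβ`, `-2iγ` are real, so entrywise complex
conjugation of `U(γ, β, θ)` flips the signs of all angles, giving `U(-γ, -β, θ)`; the same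
conjugation leaves `n(θ)`, `σz` and the real part of a trace unchanged. -/

open NormedSpace

section

variable {m 𝔸 : Type*} [Fintype m] [DecidableEq m] [CommRing 𝔸] [StarRing 𝔸]
  [TopologicalSpace 𝔸] [IsTopologicalRing 𝔸] [ContinuousStar 𝔸] [Algebra ℚ 𝔸] [T2Space 𝔸]

theorem Matrix.mapMatrix_starRingEnd_exp (A : Matrix m m 𝔸) :
    (starRingEnd 𝔸).mapMatrix (exp A) = exp ((starRingEnd 𝔸).mapMatrix A) := by
  change (exp A)ᴴᵀ = exp Aᴴᵀ
  rw [← exp_conjTranspose, ← exp_transpose]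

end

local notation "conjM" => RingHom.mapMatrix (starRingEnd ℂ)

section

variable {m : Type*} [Fintype m] [DecidableEq m]

theorem conjM_smul (c : ℂ) (A : Matrix m m ℂ) : conjM (c • A) = starRingEnd ℂ c • conjM A := by
  ext i j; simp

theorem conjM_exp_smul {M : Matrix m m ℂ} (hM : conjM M = M) (c : ℂ) :
    conjM (exp (c • M)) = exp (starRingEnd ℂ c • M) := by
  rw [Matrix.mapMatrix_starRingEnd_exp, conjM_smul, hM]

theorem conjM_conjTranspose (A : Matrix m m ℂ) : (conjM A)ᴴ = conjM Aᴴ :=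
  (Matrix.conjTranspose_map _ fun _ => rfl).symm

theorem re_trace_conjM (A : Matrix m m ℂ) : (conjM A).trace.re = A.trace.re := by
  change Aᴴᵀ.trace.re = _
  rw [trace_transpose, trace_conjTranspose]
  exact Complex.conj_re _

end

theorem conjM_σz : conjM σz = σz := by
  ext i j; fin_cases i <;> fin_cases j <;> simp [σz]

theorem conjM_σx : conjM σx = σx := by
  ext i j; fin_cases i <;> fin_cases j <;> simp [σx]

theorem conjM_nvec (θ : ℝ) : conjM (nvec θ) = nvec θ := by
  simp only [nvec, map_add, conjM_smul, Complex.conj_ofReal, conjM_σz, conjM_σx]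

theorem conjM_UB (β : ℝ) : conjM (UB β) = UB (-β) := by
  rw [UB, UB, conjM_exp_smul conjM_σz]
  simp [map_ofNat]

theorem conjM_UC (γ θ : ℝ) : conjM (UC γ θ) = UC (-γ) θ := by
  rw [UC, UC, conjM_exp_smul (conjM_nvec θ)]
  simp [map_ofNat]

theorem conjM_Uqaoa (p : ℕ) (γ β : Fin p → ℝ) (θ : ℝ) :
    conjM (Uqaoa p γ β θ) = Uqaoa p (fun i => -γ i) (fun i => -β i) θ := by
  simp only [Uqaoa, map_list_prod, List.map_reverse, List.map_ofFn, Function.comp_def, map_mul,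
    conjM_UB, conjM_UC]

theorem pseudospin_even_in_angles_general
    (p : ℕ) (γ β : Fin p → ℝ) (θ : ℝ) :
    Fps p γ β θ = Fps p (fun i => -γ i) (fun i => -β i) θ := by
  set U := Uqaoa p γ β θ
  have conjM_product : nvec θ * conjM U * σz * (conjM U)ᴴ = conjM (nvec θ * U * σz * Uᴴ) := by
    simp only [map_mul, conjM_nvec, conjM_σz, conjM_conjTranspose]
  rw [Fps, Fps, ← conjM_Uqaoa, conjM_product, re_trace_conjM]

/-- The pseudospin expectation is an even function of the angle sequence. -/
theorem pseudospin_even_in_angles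
    (p : ℕ) (hp : 1 ≤ p) (γ β : Fin p → ℝ) (θ : ℝ) :
    Fps p γ β θ = Fps p (fun i => -γ i) (fun i => -β i) θ :=
  pseudospin_even_in_angles_general p γ β θ
end
end
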